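/- arXiv:1705.08521 — 2 statements merged into one kernel-verified Lean document; each statement's English description precedes it below -/
import Mathlib

section
/- The operator norm of the Weingarten map L_R(N) on the tangent space at R is σ₁(N)/σ_r(R), i.e., the maximal principal curvature of the fixed-rank-r manifold at R in the unit normal direction N/‖N‖ equals 1/σ_r(R) times σ₁(N)/‖N‖ ≤ 1/σ_r(R). -/
open Matrix

/-- Frobenius norm of a real matrix. -/
noncomputable def fnorm {l m : ℕ} (A : Matrix (Fin l) (Fin m) ℝ) : ℝ :=
  Real.sqrt (Matrix.trace (Aᵀ * A))

/-- The linear map `X ↦ A * X * B`. -/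
def mulLeftRight {l m : ℕ} (A : Matrix (Fin l) (Fin l) ℝ) (B : Matrix (Fin m) (Fin m) ℝ) :
    Matrix (Fin l) (Fin m) ℝ →ₗ[ℝ] Matrix (Fin l) (Fin m) ℝ where
  toFun X := A * X * B
  map_add' X Y := by simp [Matrix.mul_add, Matrix.add_mul]
  map_smul' c X := by simp [Matrix.mul_smul, Matrix.smul_mul]

/-!
Write `R = ∑_{i ≤ r} σᵢ uᵢvᵢᵀ` and `N = ∑_{j > r} σⱼ uⱼvⱼᵀ`, and view matrices as Euclidean
vectors for the Frobenius inner product. The rank-one matrices `uᵢvⱼᵀ` and `uⱼvᵢᵀ` (`i ≤ r < j`)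
form an orthonormal family, and `L_R(N) X = ∑ σⱼ/σᵢ (⟪uⱼvᵢᵀ, X⟫ uᵢvⱼᵀ + ⟪uᵢvⱼᵀ, X⟫ uⱼvᵢᵀ)` only
swaps the two members of each pair `{uᵢvⱼᵀ, uⱼvᵢᵀ}` and scales by `σⱼ/σᵢ ≤ σ₁(N)/σ_r(R)`.
Bessel's inequality then bounds the norm of `L_R(N)`, with equality at `X = uᵢvⱼᵀ` for the
extremal pair, and `σ₁(N) = ⟪uⱼvⱼᵀ, N⟫ ≤ ‖N‖` by Cauchy–Schwarz.
-/

open scoped RealInnerProductSpace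

namespace Orthonormal

variable {ι E : Type*} [Fintype ι] [NormedAddCommGroup E] [InnerProductSpace ℝ E] {F : ι → E}

theorem norm_sum_smul_sq (hF : Orthonormal ℝ F) (c : ι → ℝ) :
    ‖∑ s, c s • F s‖ ^ 2 = ∑ s, c s ^ 2 := by
  rw [← real_inner_self_eq_norm_sq, hF.inner_sum]
  simp [sq]

theorem le_norm_sum_smul (hF : Orthonormal ℝ F) (c : ι → ℝ) (t : ι) :
    c t ≤ ‖∑ s, c s • F s‖ :=
  calc c t = ⟪F t, ∑ s, c s • F s⟫ := (hF.inner_right_fintype c t).symm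
    _ ≤ ‖F t‖ * ‖∑ s, c s • F s‖ := real_inner_le_norm _ _
    _ = ‖∑ s, c s • F s‖ := by rw [hF.norm_eq_one, one_mul]

theorem norm_sum_weighted_inner_le (hF : Orthonormal ℝ F) (e : ι ≃ ι) {w : ι → ℝ} {K : ℝ}
    (hK : 0 ≤ K) (hw : ∀ s, |w s| ≤ K) (x : E) :
    ‖∑ s, (w s * ⟪F (e s), x⟫) • F s‖ ≤ K * ‖x‖ := by
  refine (pow_le_pow_iff_left₀ (norm_nonneg _) (by positivity) two_ne_zero).1 ?_
  calc ‖∑ s, (w s * ⟪F (e s), x⟫) • F s‖ ^ 2 = ∑ s, w s ^ 2 * ⟪F (e s), x⟫ ^ 2 := by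
        simp only [hF.norm_sum_smul_sq, mul_pow]
    _ ≤ ∑ s, K ^ 2 * ⟪F (e s), x⟫ ^ 2 :=
        Finset.sum_le_sum fun s _ => mul_le_mul_of_nonneg_right
          (sq_le_sq' (neg_le_of_abs_le (hw s)) (le_of_abs_le (hw s))) (sq_nonneg _)
    _ = K ^ 2 * ∑ s, ‖⟪F s, x⟫‖ ^ 2 := by
        simp only [← Finset.mul_sum, Real.norm_eq_abs, sq_abs, e.sum_comp (fun s => ⟪F s, x⟫ ^ 2)]
    _ ≤ K ^ 2 * ‖x‖ ^ 2 := by gcongr; exact hF.sum_inner_products_le x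
    _ = (K * ‖x‖) ^ 2 := by ring

theorem sum_weighted_inner_apply (hF : Orthonormal ℝ F) (e : ι ≃ ι) (w : ι → ℝ) (t : ι) :
    ∑ s, (w s * ⟪F (e s), F (e t)⟫) • F s = w t • F t := by
  classical
  simp [orthonormal_iff_ite.1 hF, e.injective.eq_iff]

end Orthonormal

section Frobenius

variable {m n : Type*}

def frobeniusVec : Matrix m n ℝ →ₗ[ℝ] EuclideanSpace ℝ (m × n) where
  toFun A := WithLp.toLp 2 fun p => A p.1 p.2
  map_add' _ _ := rfl
  map_smul' _ _ := rfl

@[simp]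
theorem frobeniusVec_apply (A : Matrix m n ℝ) (p : m × n) : frobeniusVec A p = A p.1 p.2 := rfl

def outerVec {ι κ : Type*} (u : ι → m → ℝ) (v : κ → n → ℝ) (p : ι × κ) :
    EuclideanSpace ℝ (m × n) :=
  frobeniusVec (vecMulVec (u p.1) (v p.2))

variable [Fintype m] [Fintype n]

theorem inner_frobeniusVec_vecMulVec (a : m → ℝ) (b : n → ℝ) (X : Matrix m n ℝ) :
    ⟪frobeniusVec (vecMulVec a b), frobeniusVec X⟫ = a ⬝ᵥ (X *ᵥ b) := by
  simp only [PiLp.inner_apply, Fintype.sum_prod_type, frobeniusVec_apply, vecMulVec_apply,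
    RCLike.inner_apply, conj_trivial, dotProduct, mulVec, Finset.mul_sum]
  exact Finset.sum_congr rfl fun i _ => Finset.sum_congr rfl fun j _ => by ring

theorem orthonormal_outerVec {ι κ : Type*} [DecidableEq ι] [DecidableEq κ] {u : ι → m → ℝ}
    {v : κ → n → ℝ} (hu : ∀ i j, u i ⬝ᵥ u j = if i = j then 1 else 0)
    (hv : ∀ i j, v i ⬝ᵥ v j = if i = j then 1 else 0) :
    Orthonormal ℝ (outerVec u v) := by
  rw [orthonormal_iff_ite]
  rintro ⟨i, j⟩ ⟨i', j'⟩
  rw [outerVec, outerVec, inner_frobeniusVec_vecMulVec, vecMulVec_mulVec]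
  by_cases hj : j = j' <;> simp [hj, hu, hv, Prod.ext_iff, eq_comm]

theorem vecMulVec_mul_transpose_mul_vecMulVec {p q : Type*} (a : p → ℝ) (b : n → ℝ)
    (X : Matrix m n ℝ) (c : m → ℝ) (d : q → ℝ) :
    vecMulVec a b * Xᵀ * vecMulVec c d = (c ⬝ᵥ (X *ᵥ b)) • vecMulVec a d := by
  rw [Matrix.mul_assoc, mul_vecMulVec, vecMulVec_mul_vecMulVec, mulVec_transpose,
    dotProduct_mulVec, dotProduct_comm, vecMulVec_smul]

theorem sum_vecMulVec_self_mulVec {ι : Type*} [Fintype ι] [DecidableEq ι] {w : ι → m → ℝ}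
    (hw : ∀ i j, w i ⬝ᵥ w j = if i = j then 1 else 0) (j : ι) :
    (∑ i, vecMulVec (w i) (w i)) *ᵥ w j = w j := by
  simp [sum_mulVec, vecMulVec_mulVec, hw]

end Frobenius

section FrobeniusNorm

variable {l m : ℕ}

theorem fnorm_eq_norm_frobeniusVec (A : Matrix (Fin l) (Fin m) ℝ) :
    fnorm A = ‖frobeniusVec A‖ := by
  rw [fnorm, EuclideanSpace.norm_eq, Fintype.sum_prod_type, Finset.sum_comm, trace]
  simp [mul_apply, sq]

theorem fnorm_vecMulVec {ι : Type*} [DecidableEq ι] {u : ι → Fin l → ℝ} {v : ι → Fin m → ℝ}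
    (hu : ∀ i j, u i ⬝ᵥ u j = if i = j then 1 else 0)
    (hv : ∀ i j, v i ⬝ᵥ v j = if i = j then 1 else 0) (a b : ι) :
    fnorm (vecMulVec (u a) (v b)) = 1 := by
  rw [fnorm_eq_norm_frobeniusVec]
  exact (orthonormal_outerVec hu hv).norm_eq_one (a, b)

theorem le_fnorm_sum_smul_vecMulVec {ι κ : Type*} [DecidableEq ι] [Fintype κ]
    {u : ι → Fin l → ℝ} {v : ι → Fin m → ℝ}
    (hu : ∀ i j, u i ⬝ᵥ u j = if i = j then 1 else 0)
    (hv : ∀ i j, v i ⬝ᵥ v j = if i = j then 1 else 0) {f : κ → ι} (hf : Function.Injective f)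
    (c : κ → ℝ) (t : κ) :
    c t ≤ fnorm (∑ s, c s • vecMulVec (u (f s)) (v (f s))) := by
  have hdiag : Orthonormal ℝ (outerVec u v ∘ fun s => (f s, f s)) :=
    (orthonormal_outerVec hu hv).comp _ fun a b h => hf (Prod.ext_iff.1 h).1
  rw [fnorm_eq_norm_frobeniusVec]
  simpa [outerVec] using hdiag.le_norm_sum_smul c t

theorem vecMulVec_mem_ker_mulLeftRight {P : Matrix (Fin l) (Fin l) ℝ} {a : Fin l → ℝ}
    (ha : P *ᵥ a = a) (b : Fin m → ℝ) (B : Matrix (Fin m) (Fin m) ℝ) :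
    vecMulVec a b ∈ LinearMap.ker (mulLeftRight (1 - P) B) := by
  change (1 - P) * vecMulVec a b * B = 0
  rw [mul_vecMulVec, sub_mulVec, one_mulVec, ha, sub_self, zero_vecMulVec, Matrix.zero_mul]

end FrobeniusNorm

section Weingarten

variable {l m r k : ℕ}

/-- `.inl (i, j)` indexes `uᵢvⱼᵀ` and `.inr (i, j)` indexes `uⱼvᵢᵀ`, for `i ≤ r < j`;
`Equiv.sumComm` exchanges the two. -/
def crossIndex : (Fin r × Fin k) ⊕ (Fin r × Fin k) → Fin (r + k) × Fin (r + k)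
  | .inl (i, j) => (Fin.castAdd k i, Fin.natAdd r j)
  | .inr (i, j) => (Fin.natAdd r j, Fin.castAdd k i)

theorem crossIndex_injective : Function.Injective (crossIndex (r := r) (k := k)) := by
  rintro (⟨i, j⟩ | ⟨i, j⟩) (⟨i', j'⟩ | ⟨i', j'⟩) h <;>
    simp_all [crossIndex, Prod.ext_iff, Fin.ext_iff] <;> omega

noncomputable def crossWeight (σ : Fin (r + k) → ℝ) : (Fin r × Fin k) ⊕ (Fin r × Fin k) → ℝ
  | .inl (i, j) | .inr (i, j) => σ (Fin.natAdd r j) / σ (Fin.castAdd k i)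

theorem abs_crossWeight_le {σ : Fin (r + k) → ℝ} (hσ : ∀ i, 0 < σ i) {s1 sr : ℝ}
    (hs1 : ∀ j, σ (Fin.natAdd r j) ≤ s1) (hsr_pos : 0 < sr) (hsr : ∀ i, sr ≤ σ (Fin.castAdd k i))
    (s : (Fin r × Fin k) ⊕ (Fin r × Fin k)) : |crossWeight σ s| ≤ s1 / sr := by
  rcases s with ⟨i, j⟩ | ⟨i, j⟩ <;>
  · rw [crossWeight, abs_of_pos (div_pos (hσ _) (hσ _))]
    exact div_le_div₀ ((hσ _).le.trans (hs1 j)) (hs1 j) hsr_pos (hsr i)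

noncomputable def weingartenMap (u : Fin (r + k) → Fin l → ℝ) (v : Fin (r + k) → Fin m → ℝ)
    (σ : Fin (r + k) → ℝ) (X : Matrix (Fin l) (Fin m) ℝ) : Matrix (Fin l) (Fin m) ℝ :=
  ∑ i : Fin r, ∑ j : Fin k,
    (σ (Fin.natAdd r j) / σ (Fin.castAdd k i)) •
      (vecMulVec (u (Fin.castAdd k i)) (v (Fin.castAdd k i)) * Xᵀ *
          vecMulVec (u (Fin.natAdd r j)) (v (Fin.natAdd r j)) +
        vecMulVec (u (Fin.natAdd r j)) (v (Fin.natAdd r j)) * Xᵀ *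
          vecMulVec (u (Fin.castAdd k i)) (v (Fin.castAdd k i)))

theorem frobeniusVec_weingartenMap (u : Fin (r + k) → Fin l → ℝ) (v : Fin (r + k) → Fin m → ℝ)
    (σ : Fin (r + k) → ℝ) (X : Matrix (Fin l) (Fin m) ℝ) :
    frobeniusVec (weingartenMap u v σ X) = ∑ s, (crossWeight σ s *
      ⟪(outerVec u v ∘ crossIndex) (Equiv.sumComm _ _ s), frobeniusVec X⟫) •
        (outerVec u v ∘ crossIndex) s := by
  rw [Fintype.sum_sum_type, ← Finset.sum_add_distrib, Fintype.sum_prod_type, weingartenMap,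
    map_sum]
  refine Finset.sum_congr rfl fun i _ => ?_
  rw [map_sum]
  refine Finset.sum_congr rfl fun j _ => ?_
  simp only [vecMulVec_mul_transpose_mul_vecMulVec, ← inner_frobeniusVec_vecMulVec, map_smul,
    map_add, smul_add, smul_smul, outerVec, Function.comp_apply, crossIndex, crossWeight,
    Equiv.sumComm_apply, Sum.swap_inl, Sum.swap_inr]

theorem fnorm_weingartenMap_le {u : Fin (r + k) → Fin l → ℝ} {v : Fin (r + k) → Fin m → ℝ}
    (hu : ∀ i j, u i ⬝ᵥ u j = if i = j then 1 else 0)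
    (hv : ∀ i j, v i ⬝ᵥ v j = if i = j then 1 else 0) {σ : Fin (r + k) → ℝ} {K : ℝ}
    (hK : 0 ≤ K) (hσK : ∀ s, |crossWeight σ s| ≤ K) (X : Matrix (Fin l) (Fin m) ℝ) :
    fnorm (weingartenMap u v σ X) ≤ K * fnorm X := by
  rw [fnorm_eq_norm_frobeniusVec, fnorm_eq_norm_frobeniusVec, frobeniusVec_weingartenMap]
  exact ((orthonormal_outerVec hu hv).comp _ crossIndex_injective).norm_sum_weighted_inner_le
    _ hK hσK _

theorem fnorm_weingartenMap_vecMulVec {u : Fin (r + k) → Fin l → ℝ}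
    {v : Fin (r + k) → Fin m → ℝ} (hu : ∀ i j, u i ⬝ᵥ u j = if i = j then 1 else 0)
    (hv : ∀ i j, v i ⬝ᵥ v j = if i = j then 1 else 0) (σ : Fin (r + k) → ℝ) (i : Fin r)
    (j : Fin k) :
    fnorm (weingartenMap u v σ (vecMulVec (u (Fin.castAdd k i)) (v (Fin.natAdd r j)))) =
      |σ (Fin.natAdd r j) / σ (Fin.castAdd k i)| := by
  have hF := (orthonormal_outerVec hu hv).comp _ crossIndex_injective
  have hX : frobeniusVec (vecMulVec (u (Fin.castAdd k i)) (v (Fin.natAdd r j))) =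
      (outerVec u v ∘ crossIndex) (Equiv.sumComm _ _ (.inr (i, j))) := rfl
  rw [fnorm_eq_norm_frobeniusVec, frobeniusVec_weingartenMap, hX, hF.sum_weighted_inner_apply,
    norm_smul, hF.norm_eq_one, mul_one, Real.norm_eq_abs, crossWeight]

end Weingarten

/-- The operator norm of the Weingarten map `L_R(N)` on the tangent space at `R` is
`σ₁(N)/σ_r(R)`; in particular, since `σ₁(N) ≤ ‖N‖`, the maximal principal curvature in the
unit normal direction `N/‖N‖` is at most `1/σ_r(R)`. -/
theorem weingarten_operator_norm
    (l m r k : ℕ)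
    (u : Fin (r + k) → Fin l → ℝ) (v : Fin (r + k) → Fin m → ℝ) (σ : Fin (r + k) → ℝ)
    (hu : ∀ i j, dotProduct (u i) (u j) = if i = j then 1 else 0)
    (hv : ∀ i j, dotProduct (v i) (v j) = if i = j then 1 else 0)
    (hσ : ∀ i, 0 < σ i)
    (N : Matrix (Fin l) (Fin m) ℝ)
    (hN : N = ∑ j : Fin k,
      σ (Fin.natAdd r j) • vecMulVec (u (Fin.natAdd r j)) (v (Fin.natAdd r j)))
    -- `σ₁(N)` : the largest singular value of `N`; `σ_r(R)` : the smallest of `R`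
    (s1 : ℝ) (hs1 : IsGreatest (Set.range fun j : Fin k => σ (Fin.natAdd r j)) s1)
    (sr : ℝ) (hsr : IsLeast (Set.range fun i : Fin r => σ (Fin.castAdd k i)) sr) :
    let PU : Matrix (Fin l) (Fin l) ℝ :=
      ∑ i : Fin r, vecMulVec (u (Fin.castAdd k i)) (u (Fin.castAdd k i))
    let PV : Matrix (Fin m) (Fin m) ℝ :=
      ∑ i : Fin r, vecMulVec (v (Fin.castAdd k i)) (v (Fin.castAdd k i))
    let T : Submodule ℝ (Matrix (Fin l) (Fin m) ℝ) :=
      LinearMap.ker (mulLeftRight (1 - PU) (1 - PV))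
    let L : Matrix (Fin l) (Fin m) ℝ → Matrix (Fin l) (Fin m) ℝ := fun X =>
      ∑ i : Fin r, ∑ j : Fin k,
        (σ (Fin.natAdd r j) / σ (Fin.castAdd k i)) •
          (vecMulVec (u (Fin.castAdd k i)) (v (Fin.castAdd k i)) * Xᵀ *
              vecMulVec (u (Fin.natAdd r j)) (v (Fin.natAdd r j)) +
            vecMulVec (u (Fin.natAdd r j)) (v (Fin.natAdd r j)) * Xᵀ *
              vecMulVec (u (Fin.castAdd k i)) (v (Fin.castAdd k i)))
    (∀ X ∈ T, fnorm (L X) ≤ (s1 / sr) * fnorm X) ∧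
    (∃ X ∈ T, X ≠ 0 ∧ fnorm (L X) = (s1 / sr) * fnorm X) ∧
    s1 ≤ fnorm N := by
  intro PU PV T L
  obtain ⟨j₁, hj₁ : σ (Fin.natAdd r j₁) = s1⟩ := hs1.1
  obtain ⟨i₁, hi₁ : σ (Fin.castAdd k i₁) = sr⟩ := hsr.1
  have hsr_pos : 0 < sr := hi₁ ▸ hσ _
  have hs1_pos : 0 < s1 := hj₁ ▸ hσ _
  have hσK := abs_crossWeight_le hσ (fun j => hs1.2 ⟨j, rfl⟩) hsr_pos (fun i => hsr.2 ⟨i, rfl⟩)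
  set X₁ := vecMulVec (u (Fin.castAdd k i₁)) (v (Fin.natAdd r j₁))
  have hX₁ : fnorm X₁ = 1 := fnorm_vecMulVec hu hv _ _
  refine ⟨fun X _ => ?_, ⟨X₁, ?_, ?_, ?_⟩, ?_⟩
  · exact fnorm_weingartenMap_le hu hv (div_pos hs1_pos hsr_pos).le hσK X
  · have hPU : PU *ᵥ u (Fin.castAdd k i₁) = u (Fin.castAdd k i₁) :=
      sum_vecMulVec_self_mulVec (w := fun i => u (Fin.castAdd k i)) (fun i j => by simp [hu]) i₁
    exact vecMulVec_mem_ker_mulLeftRight hPU _ _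
  · intro h
    simp [h, fnorm] at hX₁
  · change fnorm (weingartenMap u v σ X₁) = _
    rw [fnorm_weingartenMap_vecMulVec hu hv, hX₁, mul_one, abs_of_pos (div_pos (hσ _) (hσ _)),
      hi₁, hj₁]
  · rw [← hj₁, hN]
    exact le_fnorm_sum_smul_vecMulVec hu hv (Fin.natAdd_injective k r) (σ ∘ Fin.natAdd r) j₁
end

section
/- Let 𝔐 ∈ ℝ^{l×m} with SVD 𝔐 = Σ_{i=1}^{r+k} σᵢ(𝔐) uᵢvᵢᵀ. The critical points of the distance function J(R) = ½‖R − 𝔐‖² restricted to the rank-r manifold (i.e., points R of rank r with 𝔐 − R normal to the manifold at R) are exactly the matrices R = Σ_{i∈A} σᵢ uᵢvᵢᵀ for subsets A ⊆ {1,…,r+k} of cardinality r (assuming distinct singular values). -/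
/-!
Write `W` and `V` for the matrices with columns `uᵢ` and `vᵢ`, so that `𝔐 = W diag(σ) Vᵀ`.
If `UᵀU = 1`, then `𝔐 - UZᵀ` is normal at `R = UZᵀ` exactly when `Zᵀ = Uᵀ𝔐` and
`𝔐Z = U(ZᵀZ)`. Then `R = Q𝔐` for the orthogonal projection `Q = UUᵀ`, and `Q` commutes with
`𝔐𝔐ᵀ = W diag(σ²) Wᵀ`. Since the `σᵢ²` are distinct and nonzero, `Q` maps every `uᵢ` to a
multiple of itself, which is `0` or `uᵢ` because `Q² = Q`; hence `R = Σ_{i∈A} σᵢuᵢvᵢᵀ` with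
`|A| = rank R = r`. Conversely, the columns `uᵢ` and `σᵢvᵢ` for `i ∈ A` factor such an `R`
normally.
-/

open Matrix

namespace Matrix

variable {𝕜 l m n ι κ : Type*}

section CommRing

variable [CommRing 𝕜]

theorem of_mul_transpose_of_eq_one [Fintype l] [DecidableEq ι] {u : ι → l → 𝕜}
    (hu : ∀ i j, u i ⬝ᵥ u j = if i = j then 1 else 0) : of u * (of u)ᵀ = 1 := by
  ext i j
  exact hu i j

theorem sum_smul_vecMulVec_eq [Fintype ι] [DecidableEq ι] (s : Finset ι) (d : ι → 𝕜)
    (u : ι → l → 𝕜) (v : ι → m → 𝕜) :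
    ∑ i ∈ s, d i • vecMulVec (u i) (v i) =
      (of u)ᵀ * diagonal (fun i => if i ∈ s then d i else 0) * of v := by
  ext x y
  rw [mul_apply]
  simp only [mul_diagonal, Matrix.sum_apply, Matrix.smul_apply, vecMulVec_apply,
    transpose_apply, of_apply, smul_eq_mul, mul_ite, ite_mul, mul_zero, zero_mul]
  rw [Finset.sum_ite_mem, Finset.univ_inter]
  exact Finset.sum_congr rfl fun i _ => by ring

section Rank

variable [StrongRankCondition 𝕜] [Fintype l] [Fintype ι] [DecidableEq ι]

theorem rank_mul_eq_right_of_mul_eq_one [Fintype m] {A' : Matrix ι l 𝕜} {A : Matrix l ι 𝕜}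
    (h : A' * A = 1) (B : Matrix ι m 𝕜) : (A * B).rank = B.rank := by
  refine le_antisymm (rank_mul_le_right A B) ?_
  calc B.rank = (A' * (A * B)).rank := by rw [← Matrix.mul_assoc, h, Matrix.one_mul]
  _ ≤ (A * B).rank := rank_mul_le_right _ _

theorem rank_mul_eq_left_of_mul_eq_one {A : Matrix ι l 𝕜} {A' : Matrix l ι 𝕜}
    (h : A * A' = 1) (B : Matrix n ι 𝕜) : (B * A).rank = B.rank := by
  refine le_antisymm (rank_mul_le_left B A) ?_
  calc B.rank = (B * A * A').rank := by rw [Matrix.mul_assoc, h, Matrix.mul_one]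
  _ ≤ (B * A).rank := rank_mul_le_left _ _

theorem rank_mul_mul_transpose [Fintype m] {W : Matrix l ι 𝕜} {V : Matrix m ι 𝕜}
    (hW : Wᵀ * W = 1) (hV : Vᵀ * V = 1) (D : Matrix ι ι 𝕜) : (W * D * Vᵀ).rank = D.rank := by
  rw [rank_mul_eq_left_of_mul_eq_one hV, rank_mul_eq_right_of_mul_eq_one hW]

end Rank

/-- The last two equations say that `M - R` is normal at `R = UZᵀ` to the manifold of
rank-`r` matrices. -/
def IsCriticalPointOnRank [Fintype l] [Fintype m] (r : ℕ) (M R : Matrix l m 𝕜) : Prop :=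
  R.rank = r ∧ ∃ (U : Matrix l (Fin r) 𝕜) (Z : Matrix m (Fin r) 𝕜),
    Uᵀ * U = 1 ∧ Z.rank = r ∧ R = U * Zᵀ ∧ Uᵀ * (M - R) = 0 ∧ (M - R) * Z = 0

theorem transpose_mul_sub_eq_zero_and_sub_mul_eq_zero_iff [Fintype l] [Fintype m] [Fintype κ]
    [DecidableEq κ] {M : Matrix l m 𝕜} {U : Matrix l κ 𝕜} {Z : Matrix m κ 𝕜}
    (hU : Uᵀ * U = 1) :
    (Uᵀ * (M - U * Zᵀ) = 0 ∧ (M - U * Zᵀ) * Z = 0) ↔ (Zᵀ = Uᵀ * M ∧ M * Z = U * (Zᵀ * Z)) := by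
  rw [Matrix.mul_sub, Matrix.sub_mul, ← Matrix.mul_assoc, hU, Matrix.one_mul, Matrix.mul_assoc,
    sub_eq_zero, sub_eq_zero, eq_comm]

theorem commute_mul_transpose_of_mul_eq [Fintype l] [Fintype κ] {K : Matrix l l 𝕜}
    {U : Matrix l κ 𝕜} (hK : Kᵀ = K) (hKU : K * U = U * (Uᵀ * K * U)) :
    Commute (U * Uᵀ) K := by
  have hsymm : (K * (U * Uᵀ))ᵀ = K * (U * Uᵀ) := by
    rw [← Matrix.mul_assoc, hKU]
    simp only [transpose_mul, transpose_transpose, hK, Matrix.mul_assoc]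
  calc U * Uᵀ * K = (K * (U * Uᵀ))ᵀ := by
        rw [transpose_mul, transpose_mul, transpose_transpose, hK, Matrix.mul_assoc]
  _ = K * (U * Uᵀ) := hsymm

theorem eq_diagonal_diag_of_commute_diagonal [NoZeroDivisors 𝕜] [Fintype ι] [DecidableEq ι]
    {C : Matrix ι ι 𝕜} {μ : ι → 𝕜} (hμ : Function.Injective μ) (h : Commute C (diagonal μ)) :
    C = diagonal C.diag := by
  ext i j
  obtain rfl | hij := eq_or_ne i j
  · simp
  have hentry := congrFun (congrFun h.eq i) j
  rw [mul_diagonal, diagonal_mul] at hentry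
  have : (μ j - μ i) * C i j = 0 := by linear_combination hentry
  rw [diagonal_apply_ne _ hij]
  exact (mul_eq_zero.1 this).resolve_left (sub_ne_zero.2 (hμ.ne hij.symm))

theorem exists_transpose_mul_self_eq_one_and_mul_transpose_eq_diagonal [Fintype ι]
    [DecidableEq ι] (A : Finset ι) :
    ∃ E : Matrix ι (Fin A.card) 𝕜,
      Eᵀ * E = 1 ∧ E * Eᵀ = diagonal fun i => if i ∈ A then 1 else 0 := by
  let e : Fin A.card → ι := fun k => A.equivFin.symm k
  have he : Function.Injective e := Subtype.val_injective.comp A.equivFin.symm.injective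
  have hsum (f : ι → 𝕜) : ∑ k, f (e k) = ∑ a ∈ A, f a := by
    rw [Equiv.sum_comp A.equivFin.symm (fun a => f a), Finset.sum_coe_sort]
  refine ⟨(1 : Matrix ι ι 𝕜).submatrix id e, ?_, ?_⟩
  · rw [transpose_submatrix, transpose_one, ← submatrix_mul _ _ _ _ _ Function.bijective_id,
      Matrix.one_mul, submatrix_one _ he]
  · ext i j
    simp only [mul_apply, submatrix_apply, transpose_apply, id, one_apply, diagonal_apply]
    rw [hsum fun a => (if i = a then 1 else 0) * if j = a then 1 else 0]
    by_cases hij : i = j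
    · subst hij
      simp
    · simp [hij]

end CommRing

section Field

variable [Field 𝕜] [Fintype l] [Fintype m] [Fintype ι] [DecidableEq ι]

theorem exists_mul_eq_mul_diagonal_of_commute {W : Matrix l ι 𝕜} (hW : Wᵀ * W = 1)
    {μ : ι → 𝕜} (hμ : Function.Injective μ) (hμ0 : ∀ i, μ i ≠ 0) {Q : Matrix l l 𝕜}
    (hQ : IsIdempotentElem Q) (hQK : Commute Q (W * diagonal μ * Wᵀ)) :
    ∃ A : Finset ι, Q * W = W * diagonal (fun i => if i ∈ A then (1 : 𝕜) else 0) := by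
  classical
  set K := W * diagonal μ * Wᵀ
  have hKW : K * W = W * diagonal μ := by rw [Matrix.mul_assoc, hW, Matrix.mul_one]
  have hWK : Wᵀ * K = diagonal μ * Wᵀ := by
    rw [← Matrix.mul_assoc, ← Matrix.mul_assoc, hW, Matrix.one_mul]
  set C := Wᵀ * Q * W
  have hCμ : Commute C (diagonal μ) := by
    calc C * diagonal μ = Wᵀ * (Q * K) * W := by simp only [C, ← hKW, Matrix.mul_assoc]
    _ = Wᵀ * (K * Q) * W := by rw [hQK.eq]
    _ = diagonal μ * C := by rw [← Matrix.mul_assoc Wᵀ K, hWK]; simp only [C, Matrix.mul_assoc]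
  have hC := eq_diagonal_diag_of_commute_diagonal hμ hCμ
  have hμinv : diagonal μ * diagonal μ⁻¹ = 1 := by
    rw [diagonal_mul_diagonal, ← diagonal_one]
    exact congrArg diagonal (funext fun i => mul_inv_cancel₀ (hμ0 i))
  have hQW : Q * W = W * C := by
    calc Q * W = Q * (K * W) * diagonal μ⁻¹ := by
          rw [hKW, Matrix.mul_assoc, Matrix.mul_assoc, hμinv, Matrix.mul_one]
    _ = K * (Q * W) * diagonal μ⁻¹ := by rw [← Matrix.mul_assoc Q, hQK.eq, Matrix.mul_assoc K]
    _ = W * (diagonal μ * C) * diagonal μ⁻¹ := by simp only [K, C, Matrix.mul_assoc]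
    _ = W * C := by rw [← hCμ.eq, Matrix.mul_assoc, Matrix.mul_assoc, hμinv, Matrix.mul_one]
  have hCC : C * C = C := by
    calc C * C = Wᵀ * (Q * (W * C)) := by simp only [C, Matrix.mul_assoc]
    _ = C := by rw [← hQW, ← Matrix.mul_assoc Q, hQ.eq, ← Matrix.mul_assoc]
  refine ⟨Finset.univ.filter fun i => C i i = 1, ?_⟩
  rw [hQW]
  conv_lhs => rw [hC]
  congr 2
  funext i
  have hCii : IsIdempotentElem (C i i) := by
    have := congrFun (congrFun hCC i) i
    rwa [hC, diagonal_mul_diagonal, diagonal_apply_eq, diagonal_apply_eq] at this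
  rcases IsIdempotentElem.iff_eq_zero_or_one.1 hCii with h | h <;> simp [h]

variable {W : Matrix l ι 𝕜} {V : Matrix m ι 𝕜} {σ : ι → 𝕜}

theorem exists_normal_factorization (hW : Wᵀ * W = 1) (hV : Vᵀ * V = 1) (A : Finset ι) :
    ∃ (U : Matrix l (Fin A.card) 𝕜) (Z : Matrix m (Fin A.card) 𝕜), Uᵀ * U = 1 ∧
      W * diagonal (fun i => if i ∈ A then σ i else 0) * Vᵀ = U * Zᵀ ∧
      Zᵀ = Uᵀ * (W * diagonal σ * Vᵀ) ∧ W * diagonal σ * Vᵀ * Z = U * (Zᵀ * Z) := by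
  obtain ⟨E, hEE, hEEt⟩ :=
    exists_transpose_mul_self_eq_one_and_mul_transpose_eq_diagonal (𝕜 := 𝕜) A
  have hD : diagonal (fun i => if i ∈ A then σ i else 0) = E * Eᵀ * diagonal σ := by
    rw [hEEt, diagonal_mul_diagonal]
    congr 1
    funext i
    split_ifs <;> simp
  refine ⟨W * E, V * diagonal σ * E, ?_, ?_, ?_, ?_⟩
  · rw [transpose_mul, Matrix.mul_assoc, ← Matrix.mul_assoc Wᵀ, hW, Matrix.one_mul, hEE]
  · simp only [hD, transpose_mul, diagonal_transpose, Matrix.mul_assoc]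
  · simp only [transpose_mul, diagonal_transpose, Matrix.mul_assoc]
    rw [← Matrix.mul_assoc Wᵀ, hW, Matrix.one_mul]
  · have hcomm : Commute (E * Eᵀ) (diagonal σ * diagonal σ) := by
      rw [hEEt, diagonal_mul_diagonal]
      exact commute_diagonal _ _
    calc W * diagonal σ * Vᵀ * (V * diagonal σ * E) = W * (diagonal σ * diagonal σ * E) := by
          simp only [Matrix.mul_assoc]
          rw [← Matrix.mul_assoc Vᵀ, hV, Matrix.one_mul]
    _ = W * (E * Eᵀ * (diagonal σ * diagonal σ) * E) := by
          rw [hcomm.eq, Matrix.mul_assoc _ (E * Eᵀ), Matrix.mul_assoc E, hEE, Matrix.mul_one]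
    _ = W * E * ((V * diagonal σ * E)ᵀ * (V * diagonal σ * E)) := by
          simp only [transpose_mul, diagonal_transpose, Matrix.mul_assoc]
          rw [← Matrix.mul_assoc Vᵀ V, hV, Matrix.one_mul]

theorem exists_finset_of_normal [Fintype κ] [DecidableEq κ] (hW : Wᵀ * W = 1)
    (hV : Vᵀ * V = 1) (hσ : ∀ i, σ i ≠ 0) (hσ2 : Function.Injective fun i => σ i ^ 2)
    {U : Matrix l κ 𝕜} {Z : Matrix m κ 𝕜} (hU : Uᵀ * U = 1)
    (hZ : Zᵀ = Uᵀ * (W * diagonal σ * Vᵀ)) (hMZ : W * diagonal σ * Vᵀ * Z = U * (Zᵀ * Z)) :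
    ∃ A : Finset ι, U * Zᵀ = W * diagonal (fun i => if i ∈ A then σ i else 0) * Vᵀ := by
  set M := W * diagonal σ * Vᵀ
  have hMMt : M * Mᵀ = W * diagonal (fun i => σ i ^ 2) * Wᵀ := by
    simp only [M, transpose_mul, diagonal_transpose, transpose_transpose, Matrix.mul_assoc]
    rw [← Matrix.mul_assoc Vᵀ V, hV, Matrix.one_mul, ← Matrix.mul_assoc (diagonal σ),
      diagonal_mul_diagonal]
    simp only [sq]
  have hcomm : Commute (U * Uᵀ) (M * Mᵀ) := by
    refine commute_mul_transpose_of_mul_eq (by rw [transpose_mul, transpose_transpose]) ?_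
    have hZ' : Z = Mᵀ * U := by
      rw [← transpose_transpose Z, hZ, transpose_mul, transpose_transpose]
    rw [Matrix.mul_assoc, ← hZ', hMZ, hZ]
    simp only [Matrix.mul_assoc, ← hZ']
  have hidem : IsIdempotentElem (U * Uᵀ) := by
    rw [IsIdempotentElem, Matrix.mul_assoc, ← Matrix.mul_assoc Uᵀ, hU, Matrix.one_mul]
  obtain ⟨A, hA⟩ := exists_mul_eq_mul_diagonal_of_commute hW hσ2 (fun i => pow_ne_zero 2 (hσ i))
    hidem (hMMt ▸ hcomm)
  refine ⟨A, ?_⟩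
  calc U * Zᵀ = U * Uᵀ * W * diagonal σ * Vᵀ := by simp only [hZ, M, Matrix.mul_assoc]
  _ = W * diagonal (fun i => if i ∈ A then σ i else 0) * Vᵀ := by
      rw [hA, Matrix.mul_assoc W, diagonal_mul_diagonal]
      congr 3
      funext i
      split_ifs <;> simp

theorem isCriticalPointOnRank_iff (hW : Wᵀ * W = 1) (hV : Vᵀ * V = 1) (hσ : ∀ i, σ i ≠ 0)
    (hσ2 : Function.Injective fun i => σ i ^ 2) (r : ℕ) (R : Matrix l m 𝕜) :
    IsCriticalPointOnRank r (W * diagonal σ * Vᵀ) R ↔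
      ∃ A : Finset ι, A.card = r ∧ R = W * diagonal (fun i => if i ∈ A then σ i else 0) * Vᵀ := by
  have hrank (A : Finset ι) :
      (W * diagonal (fun i => if i ∈ A then σ i else 0) * Vᵀ).rank = A.card := by
    classical
    rw [rank_mul_mul_transpose hW hV, rank_diagonal]
    exact Fintype.card_of_subtype A fun i => by by_cases hi : i ∈ A <;> simp [hi, hσ]
  constructor
  · rintro ⟨hr, U, Z, hU, -, rfl, hnormal⟩
    obtain ⟨hZ, hMZ⟩ := (transpose_mul_sub_eq_zero_and_sub_mul_eq_zero_iff hU).1 hnormal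
    obtain ⟨A, hA⟩ := exists_finset_of_normal hW hV hσ hσ2 hU hZ hMZ
    exact ⟨A, by rw [← hr, hA, hrank], hA⟩
  · rintro ⟨A, rfl, rfl⟩
    obtain ⟨U, Z, hU, hR, hZ, hMZ⟩ := exists_normal_factorization (σ := σ) hW hV A
    refine ⟨hrank A, U, Z, hU, le_antisymm ?_ ?_, hR, hR ▸
      (transpose_mul_sub_eq_zero_and_sub_mul_eq_zero_iff hU).2 ⟨hZ, hMZ⟩⟩
    · simpa using rank_le_card_width Z
    · calc A.card = (U * Zᵀ).rank := by rw [← hR, hrank]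
      _ ≤ Zᵀ.rank := rank_mul_le_right U Zᵀ
      _ = Z.rank := rank_transpose Z

end Field

end Matrix

/-- The critical points of `J(R) = ½‖R − 𝔐‖²` on the rank-`r` manifold (points `R` of rank
`r` with residual `𝔐 − R` normal to the manifold at `R`) are exactly the matrices
`Σ_{i∈A} σᵢuᵢvᵢᵀ` over subsets `A` of cardinality `r` of the singular triplets of `𝔐`
(assuming distinct positive singular values). -/
theorem critical_points_of_distance_to_rank_r
    (l m r n : ℕ)
    (u : Fin n → Fin l → ℝ) (v : Fin n → Fin m → ℝ) (σ : Fin n → ℝ)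
    (hu : ∀ i j, dotProduct (u i) (u j) = if i = j then 1 else 0)
    (hv : ∀ i j, dotProduct (v i) (v j) = if i = j then 1 else 0)
    (hσpos : ∀ i, 0 < σ i)
    (hσdist : ∀ i j : Fin n, i ≠ j → σ i ≠ σ j)
    (𝔐 : Matrix (Fin l) (Fin m) ℝ)
    (h𝔐 : 𝔐 = ∑ i : Fin n, σ i • vecMulVec (u i) (v i)) :
    ∀ R : Matrix (Fin l) (Fin m) ℝ,
      (R.rank = r ∧
        ∃ (U : Matrix (Fin l) (Fin r) ℝ) (Z : Matrix (Fin m) (Fin r) ℝ),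
          Uᵀ * U = 1 ∧ Z.rank = r ∧ R = U * Zᵀ ∧
          Uᵀ * (𝔐 - R) = 0 ∧ (𝔐 - R) * Z = 0) ↔
      (∃ A : Finset (Fin n), A.card = r ∧ R = ∑ i ∈ A, σ i • vecMulVec (u i) (v i)) := by
  intro R
  have hσ2 : Function.Injective fun i => σ i ^ 2 := fun i j hij => by
    by_contra hne
    exact hσdist i j hne ((pow_left_inj₀ (hσpos i).le (hσpos j).le two_ne_zero).1 hij)
  have hM : 𝔐 = (of u)ᵀ * diagonal σ * of v := by
    simpa only [Finset.mem_univ, if_true, sum_smul_vecMulVec_eq] using h𝔐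
  simp_rw [hM, sum_smul_vecMulVec_eq]
  exact isCriticalPointOnRank_iff (of_mul_transpose_of_eq_one hu) (of_mul_transpose_of_eq_one hv)
    (fun i => (hσpos i).ne') hσ2 r R
end
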